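/- arXiv:2312.04032 — 3 statements merged into one kernel-verified Lean document; each statement's English description precedes it below -/
import Mathlib

section
/- Let (Ω, P) be a probability space and k a positive natural number. For each i ∈ Fin k, let gᵢ : Ω → ℝ be a square-integrable random variable with E[gᵢ] = μᵢ and Var[gᵢ] = σ²/B for a real σ ≥ 0 and positive natural number B (batch size), and let mᵢ : Ω → ℝ be a random variable taking values in {0,1} with P(mᵢ = 1) = p for a real 0 < p ≤ 1. Assume the family {g₁, …, g_k, m₁, …, m_k} is mutually independent, and let η ∈ ℝ. Define Δθᵢ := −η·(mᵢ/p)·gᵢ. Then Var[Δθᵢ] = η²σ²/(pB) + ((1 − p)/p)·η²·μᵢ² for every i, and Cov(Δθᵢ, Δθⱼ) = 0 for i ≠ j; i.e., the covariance matrix of the update Δθ equals (η²σ²/(pB))·I + ((1 − p)η²/p)·diag(μ₁², …, μ_k²). -/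
open MeasureTheory ProbabilityTheory

/-- The covariance `Cov(X,Y) = E[XY] - E[X]E[Y]`. -/
noncomputable def cov {Ω : Type*} [MeasurableSpace Ω] (μ : Measure Ω) (X Y : Ω → ℝ) : ℝ :=
  (∫ ω, X ω * Y ω ∂μ) - (∫ ω, X ω ∂μ) * (∫ ω, Y ω ∂μ)

/-- The variance `Var[X] = E[X²] - (E[X])²`. -/
noncomputable def var {Ω : Type*} [MeasurableSpace Ω] (μ : Measure Ω) (X : Ω → ℝ) : ℝ :=
  (∫ ω, X ω ^ 2 ∂μ) - (∫ ω, X ω ∂μ) ^ 2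

section MaskedProduct

variable {Ω : Type*} [MeasurableSpace Ω] {μ : Measure Ω}

theorem var_const_mul (c : ℝ) (X : Ω → ℝ) :
    var μ (fun ω => c * X ω) = c ^ 2 * var μ X := by
  simp only [var, mul_pow, integral_const_mul]
  ring

theorem cov_eq_zero_of_indepFun {X Y : Ω → ℝ} (hXY : IndepFun X Y μ)
    (hX : AEStronglyMeasurable X μ) (hY : AEStronglyMeasurable Y μ) : cov μ X Y = 0 := by
  rw [cov, sub_eq_zero]
  exact hXY.integral_mul_eq_mul_integral hX hY

theorem integral_eq_measureReal_of_zero_or_one {m : Ω → ℝ} (hm : Measurable m)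
    (hm01 : ∀ ω, m ω = 0 ∨ m ω = 1) : ∫ ω, m ω ∂μ = μ.real {ω | m ω = 1} := by
  have hm_eq : m = Set.indicator {ω | m ω = 1} 1 := by
    funext ω
    rcases hm01 ω with h | h <;> simp [h]
  conv_lhs => rw [hm_eq]
  exact integral_indicator_one (hm (measurableSet_singleton 1))

/-- Rescaling by `1 / p` keeps the mean `E g`, while `m² = m` turns the second moment into
`E[g²] / p`. -/
theorem var_div_mul_of_indepFun {m g : Ω → ℝ} {p : ℝ} (hp : p ≠ 0) (hmg : IndepFun m g μ)
    (hm : AEStronglyMeasurable m μ) (hg : AEStronglyMeasurable g μ)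
    (hm01 : ∀ ω, m ω = 0 ∨ m ω = 1) (hmean : ∫ ω, m ω ∂μ = p) :
    var μ (fun ω => m ω / p * g ω) = var μ g / p + (1 - p) / p * (∫ ω, g ω ∂μ) ^ 2 := by
  have hmean_mul : ∫ ω, m ω * g ω ∂μ = p * ∫ ω, g ω ∂μ := by
    rw [← hmean]
    exact hmg.integral_mul_eq_mul_integral hm hg
  have hmean_mul_sq : ∫ ω, m ω * g ω ^ 2 ∂μ = p * ∫ ω, g ω ^ 2 ∂μ := by
    rw [← hmean]
    exact (hmg.comp measurable_id (measurable_id.pow_const 2)).integral_mul_eq_mul_integral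
      hm (hg.pow 2)
  have hsq : ∀ ω, (m ω / p * g ω) ^ 2 = p⁻¹ ^ 2 * (m ω * g ω ^ 2) := by
    intro ω
    rcases hm01 ω with h | h <;> simp [h, mul_pow, div_eq_inv_mul]
  have hsq_mean : ∫ ω, (m ω / p * g ω) ^ 2 ∂μ = (∫ ω, g ω ^ 2 ∂μ) / p := by
    simp only [hsq, integral_const_mul, hmean_mul_sq]
    field_simp
  have hmean_div_mul : ∫ ω, m ω / p * g ω ∂μ = ∫ ω, g ω ∂μ := by
    simp only [div_mul_eq_mul_div, integral_div, hmean_mul]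
    field_simp
  rw [var, var, hsq_mean, hmean_div_mul]
  field_simp
  ring

end MaskedProduct

theorem masked_update_covariance_general {Ω : Type*} [MeasurableSpace Ω]
    (μ : Measure Ω)
    (k : ℕ) (g m : Fin k → Ω → ℝ)
    (μv : Fin k → ℝ) (σ : ℝ) (B : ℕ)
    (p : ℝ) (hp0 : 0 < p)
    (hgm : ∀ i, Measurable (g i))
    (hgmean : ∀ i, ∫ ω, g i ω ∂μ = μv i)
    (hgvar : ∀ i, var μ (g i) = σ ^ 2 / (B : ℝ))
    (hmm : ∀ i, Measurable (m i))
    (hm01 : ∀ i ω, m i ω = 0 ∨ m i ω = 1)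
    (hmp : ∀ i, μ {ω | m i ω = 1} = ENNReal.ofReal p)
    (hind : iIndepFun (m := fun _ : Fin k ⊕ Fin k => Real.measurableSpace)
      (Sum.elim g m) μ)
    (η : ℝ) (Δθ : Fin k → Ω → ℝ)
    (hΔθ : ∀ i ω, Δθ i ω = -η * ((m i ω / p) * g i ω)) :
    (∀ i, var μ (Δθ i) = η ^ 2 * σ ^ 2 / (p * (B : ℝ)) + ((1 - p) / p) * η ^ 2 * (μv i) ^ 2)
      ∧ (∀ i j, i ≠ j → cov μ (Δθ i) (Δθ j) = 0) := by
  have hmean : ∀ i, ∫ ω, m i ω ∂μ = p := fun i => by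
    rw [integral_eq_measureReal_of_zero_or_one (hmm i) (hm01 i), measureReal_def, hmp i,
      ENNReal.toReal_ofReal hp0.le]
  have hΔθ_meas : ∀ i, Measurable (Δθ i) := fun i => by
    simp only [funext (hΔθ i)]
    fun_prop
  have hsum_meas : ∀ s, Measurable (Sum.elim g m s) := by
    rintro (s | s)
    exacts [hgm s, hmm s]
  refine ⟨fun i => ?_, fun i j hij => ?_⟩
  · have hind_mg : IndepFun (m i) (g i) μ := by
      simpa using hind.indepFun (i := Sum.inr i) (j := Sum.inl i) Sum.inr_ne_inl
    rw [funext (hΔθ i), var_const_mul, var_div_mul_of_indepFun hp0.ne' hind_mg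
      (hmm i).aestronglyMeasurable (hgm i).aestronglyMeasurable (hm01 i) (hmean i),
      hgvar, hgmean]
    ring
  · have hind_mul : IndepFun (m i * g i) (m j * g j) μ :=
      hind.indepFun_mul_mul hsum_meas (Sum.inr i) (Sum.inl i) (Sum.inr j) (Sum.inl j)
        (by simpa using hij) Sum.inr_ne_inl Sum.inl_ne_inr (by simpa using hij)
    have hind_Δθ : IndepFun (Δθ i) (Δθ j) μ := by
      convert hind_mul.comp (measurable_const_mul (-η / p)) (measurable_const_mul (-η / p))
        using 1 <;> funext ω <;> simp [hΔθ] <;> ring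
    exact cov_eq_zero_of_indepFun hind_Δθ (hΔθ_meas i).aestronglyMeasurable
      (hΔθ_meas j).aestronglyMeasurable

/-- Covariance structure of the masked SGD update (Theorem of Xu et al. 2021): with
gradient coordinates `gᵢ` of mean `μᵢ` and variance `σ²/B`, mutually independent
Bernoulli masks `mᵢ` of parameter `p > 0` (the whole family `{gᵢ} ∪ {mᵢ}` being mutually
independent) and update `Δθᵢ = -η (mᵢ/p) gᵢ`, each coordinate has variance
`η²σ²/(pB) + ((1-p)/p) η² μᵢ²` and distinct coordinates are uncorrelated. -/
theorem masked_update_covariance {Ω : Type*} [MeasurableSpace Ω]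
    (μ : Measure Ω) [IsProbabilityMeasure μ]
    (k : ℕ) (hk : 0 < k) (g m : Fin k → Ω → ℝ)
    (μv : Fin k → ℝ) (σ : ℝ) (hσ : 0 ≤ σ) (B : ℕ) (hB : 0 < B)
    (p : ℝ) (hp0 : 0 < p) (hp1 : p ≤ 1)
    (hgm : ∀ i, Measurable (g i)) (hg : ∀ i, MemLp (g i) 2 μ)
    (hgmean : ∀ i, ∫ ω, g i ω ∂μ = μv i)
    (hgvar : ∀ i, var μ (g i) = σ ^ 2 / (B : ℝ))
    (hmm : ∀ i, Measurable (m i))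
    (hm01 : ∀ i ω, m i ω = 0 ∨ m i ω = 1)
    (hmp : ∀ i, μ {ω | m i ω = 1} = ENNReal.ofReal p)
    (hind : iIndepFun (m := fun _ : Fin k ⊕ Fin k => Real.measurableSpace)
      (Sum.elim g m) μ)
    (η : ℝ) (Δθ : Fin k → Ω → ℝ)
    (hΔθ : ∀ i ω, Δθ i ω = -η * ((m i ω / p) * g i ω)) :
    (∀ i, var μ (Δθ i) = η ^ 2 * σ ^ 2 / (p * (B : ℝ)) + ((1 - p) / p) * η ^ 2 * (μv i) ^ 2)
      ∧ (∀ i j, i ≠ j → cov μ (Δθ i) (Δθ j) = 0) :=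
  masked_update_covariance_general μ k g m μv σ B p hp0 hgm hgmean hgvar hmm hm01 hmp hind η Δθ hΔθ
end

section
/- Let (Ω, P) be a probability space, let g : Ω → ℝ be a square-integrable random variable with Var[g] = σ²/B for a real σ ≥ 0 and positive natural number B, and let m : Ω → ℝ be a random variable taking values in {0,1} with P(m = 1) = p for a real 0 < p ≤ 1, independent of g. Let p̂ be a real with 0 < p̂ ≤ p. Then the scaled masked gradient g̃ := (m/p)·g satisfies Var[g̃] ≤ σ²/(p̂·B) + ((1 − p̂)/p̂)·(E[g])². -/
open MeasureTheory ProbabilityTheory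

/-!
Since `m² = m` and `m` is independent of `g`, both `E[m g] = p E[g]` and `E[m g²] = p E[g²]`,
so `Var[(m/p) g] = E[g²]/p - E[g]² = Var[g]/p + (1/p - 1) E[g]²`. Both terms only grow when `p`
is replaced by the smaller `p̂`.
-/

section BernoulliMask

variable {Ω : Type*} [MeasurableSpace Ω] {μ : Measure Ω} {m g : Ω → ℝ} {p : ℝ}

lemma integral_eq_of_bernoulli (hm : Measurable m) (hm01 : ∀ ω, m ω = 0 ∨ m ω = 1)
    (hmp : μ {ω | m ω = 1} = ENNReal.ofReal p) (hp : 0 ≤ p) :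
    ∫ ω, m ω ∂μ = p := by
  have hm_indicator : m = Set.indicator {ω | m ω = 1} (fun _ => 1) := by
    funext ω
    rcases hm01 ω with h | h <;> simp [h]
  have hs : MeasurableSet {ω | m ω = 1} := hm (measurableSet_singleton 1)
  rw [hm_indicator, integral_indicator_const _ hs, measureReal_def, hmp,
    ENNReal.toReal_ofReal hp, smul_eq_mul, mul_one]

lemma integral_mul_eq_of_indepFun_bernoulli {h : Ω → ℝ} (hm : Measurable m)
    (hm01 : ∀ ω, m ω = 0 ∨ m ω = 1) (hmp : μ {ω | m ω = 1} = ENNReal.ofReal p) (hp : 0 ≤ p)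
    (hind : IndepFun m h μ) (hh : AEStronglyMeasurable h μ) :
    ∫ ω, m ω * h ω ∂μ = p * ∫ ω, h ω ∂μ := by
  rw [← integral_eq_of_bernoulli hm hm01 hmp hp]
  exact hind.integral_mul_eq_mul_integral hm.aestronglyMeasurable hh

theorem var_div_mul_of_indepFun_bernoulli (hm : Measurable m) (hm01 : ∀ ω, m ω = 0 ∨ m ω = 1)
    (hmp : μ {ω | m ω = 1} = ENNReal.ofReal p) (hp : 0 < p)
    (hind : IndepFun m g μ) (hg : AEStronglyMeasurable g μ) :
    var μ (fun ω => m ω / p * g ω)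
      = var μ g / p + (1 / p - 1) * (∫ ω, g ω ∂μ) ^ 2 := by
  have hmean : ∫ ω, m ω * g ω ∂μ = p * ∫ ω, g ω ∂μ :=
    integral_mul_eq_of_indepFun_bernoulli hm hm01 hmp hp.le hind hg
  have hsecond : ∫ ω, m ω * g ω ^ 2 ∂μ = p * ∫ ω, g ω ^ 2 ∂μ :=
    integral_mul_eq_of_indepFun_bernoulli hm hm01 hmp hp.le
      (hind.comp measurable_id (measurable_id.pow_const 2)) (hg.pow 2)
  have hsq : ∫ ω, (m ω / p * g ω) ^ 2 ∂μ = (p ^ 2)⁻¹ * ∫ ω, m ω * g ω ^ 2 ∂μ := by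
    rw [← integral_const_mul]
    congr 1 with ω
    have hm_sq : m ω ^ 2 = m ω := by rcases hm01 ω with h | h <;> simp [h]
    rw [mul_pow, div_pow, hm_sq]
    ring
  have hlin : ∫ ω, m ω / p * g ω ∂μ = p⁻¹ * ∫ ω, m ω * g ω ∂μ := by
    rw [← integral_const_mul]
    congr 1 with ω
    ring
  rw [var, var, hsq, hlin, hsecond, hmean]
  field_simp
  ring

end BernoulliMask

theorem masked_gradient_variance_bound_general {Ω : Type*} [MeasurableSpace Ω]
    (μ : Measure Ω)
    (g m : Ω → ℝ) (σ : ℝ) (B : ℕ)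
    (p : ℝ) (hp0 : 0 < p)
    (hgm : Measurable g)
    (hgvar : var μ g = σ ^ 2 / (B : ℝ))
    (hmm : Measurable m)
    (hm01 : ∀ ω, m ω = 0 ∨ m ω = 1)
    (hmp : μ {ω | m ω = 1} = ENNReal.ofReal p)
    (hind : IndepFun m g μ)
    (phat : ℝ) (hphat0 : 0 < phat) (hphatp : phat ≤ p) :
    var μ (fun ω => (m ω / p) * g ω)
      ≤ σ ^ 2 / (phat * (B : ℝ)) + ((1 - phat) / phat) * (∫ ω, g ω ∂μ) ^ 2 := by
  have hvar_nonneg : 0 ≤ var μ g := hgvar ▸ by positivity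
  calc var μ (fun ω => (m ω / p) * g ω)
      = var μ g / p + (1 / p - 1) * (∫ ω, g ω ∂μ) ^ 2 :=
        var_div_mul_of_indepFun_bernoulli hmm hm01 hmp hp0 hind hgm.aestronglyMeasurable
    _ ≤ var μ g / phat + (1 / phat - 1) * (∫ ω, g ω ∂μ) ^ 2 := by gcongr
    _ = σ ^ 2 / (phat * (B : ℝ)) + ((1 - phat) / phat) * (∫ ω, g ω ∂μ) ^ 2 := by
        rw [hgvar, div_div, mul_comm (B : ℝ), sub_div, div_self hphat0.ne', one_div]

/-- Componentwise covariance bound of the paper's Corollary: if `g` has variance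
`σ²/B` and `m` is an independent Bernoulli mask with parameter `p ≥ p̂ > 0`, then
`Var[(m/p) g] ≤ σ²/(p̂ B) + ((1-p̂)/p̂) (E[g])²`. -/
theorem masked_gradient_variance_bound {Ω : Type*} [MeasurableSpace Ω]
    (μ : Measure Ω) [IsProbabilityMeasure μ]
    (g m : Ω → ℝ) (σ : ℝ) (hσ : 0 ≤ σ) (B : ℕ) (hB : 0 < B)
    (p : ℝ) (hp0 : 0 < p) (hp1 : p ≤ 1)
    (hgm : Measurable g) (hg : MemLp g 2 μ)
    (hgvar : var μ g = σ ^ 2 / (B : ℝ))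
    (hmm : Measurable m)
    (hm01 : ∀ ω, m ω = 0 ∨ m ω = 1)
    (hmp : μ {ω | m ω = 1} = ENNReal.ofReal p)
    (hind : IndepFun m g μ)
    (phat : ℝ) (hphat0 : 0 < phat) (hphatp : phat ≤ p) :
    var μ (fun ω => (m ω / p) * g ω)
      ≤ σ ^ 2 / (phat * (B : ℝ)) + ((1 - phat) / phat) * (∫ ω, g ω ∂μ) ^ 2 :=
  masked_gradient_variance_bound_general μ g m σ B p hp0 hgm hgvar hmm hm01 hmp hind phat hphat0
    hphatp
end

section
/- Let (Ω, P) be a probability space and k a positive natural number. For each i ∈ Fin k, let gᵢ : Ω → ℝ be a square-integrable random variable and mᵢ : Ω → ℝ a random variable taking values in {0,1} with P(mᵢ = 1) = pᵢ for reals 0 < pᵢ ≤ 1, and assume the family {g₁, …, g_k, m₁, …, m_k} is mutually independent. Set g̃ᵢ := (mᵢ/pᵢ)·gᵢ. Then the covariance matrix of (g̃₁, …, g̃_k) is diagonal with entries Cov(g̃ᵢ, g̃ᵢ) = Var[gᵢ]/pᵢ + ((1 − pᵢ)/pᵢ)·(E[gᵢ])², and Cov(g̃ᵢ, g̃ⱼ)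 = 0 for i ≠ j. -/
open MeasureTheory ProbabilityTheory

section

variable {Ω : Type*} [MeasurableSpace Ω] {μ : Measure Ω}

theorem integral_eq_of_zero_or_one {m : Ω → ℝ} (hm : Measurable m)
    (hm01 : ∀ ω, m ω = 0 ∨ m ω = 1) {p : ℝ} (hp : 0 ≤ p)
    (hmp : μ {ω | m ω = 1} = ENNReal.ofReal p) : ∫ ω, m ω ∂μ = p := by
  have hs : MeasurableSet {ω | m ω = 1} := hm (measurableSet_singleton 1)
  have hm_eq : m = {ω | m ω = 1}.indicator 1 := by
    funext ω
    rcases hm01 ω with h | h <;> simp [h]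
  rw [hm_eq, integral_indicator_one hs, measureReal_def, hmp, ENNReal.toReal_ofReal hp]

/-- Since `m² = m`, the second moment of the scaled mask is `E[m g²] / p² = E[g²] / p`, while its
mean is `E[m g] / p = E[g]`. -/
theorem cov_self_mask_mul {m g : Ω → ℝ} {p : ℝ} (hp : p ≠ 0) (hm01 : ∀ ω, m ω = 0 ∨ m ω = 1)
    (hmg : IndepFun m g μ) (hm : AEStronglyMeasurable m μ) (hg : AEStronglyMeasurable g μ)
    (hm_int : ∫ ω, m ω ∂μ = p) :
    cov μ (fun ω => m ω / p * g ω) (fun ω => m ω / p * g ω)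
      = var μ g / p + ((1 - p) / p) * (∫ ω, g ω ∂μ) ^ 2 := by
  have hmg_sq : IndepFun m (fun ω => g ω ^ 2) μ :=
    hmg.comp measurable_id (measurable_id.pow_const 2)
  have h_sq : (fun ω => m ω / p * g ω * (m ω / p * g ω)) = fun ω => p⁻¹ ^ 2 * (m ω * g ω ^ 2) := by
    funext ω
    rcases hm01 ω with h | h <;> simp only [h] <;> ring
  have h_second : ∫ ω, m ω / p * g ω * (m ω / p * g ω) ∂μ = p⁻¹ * ∫ ω, g ω ^ 2 ∂μ := by
    rw [h_sq, integral_const_mul, hmg_sq.integral_fun_mul_eq_mul_integral hm (hg.pow 2), hm_int]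
    field_simp
  have h_mean : ∫ ω, m ω / p * g ω ∂μ = ∫ ω, g ω ∂μ := by
    simp_rw [div_mul_eq_mul_div, integral_div, hmg.integral_fun_mul_eq_mul_integral hm hg, hm_int]
    field_simp
  rw [cov, var, h_second, h_mean]
  field_simp
  ring

end

theorem masked_gradient_covariance_structure_general {Ω : Type*} [MeasurableSpace Ω]
    (μ : Measure Ω)
    (k : ℕ) (g m : Fin k → Ω → ℝ)
    (p : Fin k → ℝ) (hp0 : ∀ i, 0 < p i)
    (hgm : ∀ i, Measurable (g i))
    (hmm : ∀ i, Measurable (m i))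
    (hm01 : ∀ i ω, m i ω = 0 ∨ m i ω = 1)
    (hmp : ∀ i, μ {ω | m i ω = 1} = ENNReal.ofReal (p i))
    (hind : iIndepFun (Sum.elim g m) μ)
    (gmask : Fin k → Ω → ℝ)
    (hgmask : ∀ i ω, gmask i ω = (m i ω / p i) * g i ω) :
    (∀ i, cov μ (gmask i) (gmask i)
        = var μ (g i) / p i + ((1 - p i) / p i) * (∫ ω, g i ω ∂μ) ^ 2)
      ∧ (∀ i j, i ≠ j → cov μ (gmask i) (gmask j) = 0) := by
  obtain rfl : gmask = fun i ω => m i ω / p i * g i ω := funext fun i => funext (hgmask i)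
  have hmeas : ∀ s, Measurable (Sum.elim g m s) := Sum.forall.2 ⟨hgm, hmm⟩
  have hmask_meas : ∀ i, Measurable fun ω => m i ω / p i * g i ω := fun i => by fun_prop
  refine ⟨fun i => ?_, fun i j hij => ?_⟩
  · exact cov_self_mask_mul (hp0 i).ne' (hm01 i)
      (hind.indepFun (i := .inr i) (j := .inl i) (by simp))
      (hmm i).aestronglyMeasurable (hgm i).aestronglyMeasurable
      (integral_eq_of_zero_or_one (hmm i) (hm01 i) (hp0 i).le (hmp i))
  · have hpairs := hind.indepFun_prodMk_prodMk hmeas (.inr i) (.inl i) (.inr j) (.inl j)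
      (by simpa using hij) (by simp) (by simp) (by simpa using hij)
    refine cov_eq_zero_of_indepFun ?_ (hmask_meas i).aestronglyMeasurable
      (hmask_meas j).aestronglyMeasurable
    exact hpairs.comp (φ := fun x => x.1 / p i * x.2) (ψ := fun x => x.1 / p j * x.2)
      (by fun_prop) (by fun_prop)

/-- Exact covariance structure of the masked gradient estimator: with square-integrable
gradient coordinates `gᵢ`, Bernoulli masks `mᵢ` of parameters `pᵢ > 0`, the whole family
mutually independent, and `g̃ᵢ = (mᵢ/pᵢ) gᵢ`, the covariance matrix of `g̃` is diagonal
with `Cov(g̃ᵢ, g̃ᵢ) = Var[gᵢ]/pᵢ + ((1-pᵢ)/pᵢ)(E[gᵢ])²` and `Cov(g̃ᵢ, g̃ⱼ) = 0` for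
`i ≠ j`. -/
theorem masked_gradient_covariance_structure {Ω : Type*} [MeasurableSpace Ω]
    (μ : Measure Ω) [IsProbabilityMeasure μ]
    (k : ℕ) (hk : 0 < k) (g m : Fin k → Ω → ℝ)
    (p : Fin k → ℝ) (hp0 : ∀ i, 0 < p i) (hp1 : ∀ i, p i ≤ 1)
    (hgm : ∀ i, Measurable (g i)) (hg : ∀ i, MemLp (g i) 2 μ)
    (hmm : ∀ i, Measurable (m i))
    (hm01 : ∀ i ω, m i ω = 0 ∨ m i ω = 1)
    (hmp : ∀ i, μ {ω | m i ω = 1} = ENNReal.ofReal (p i))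
    (hind : iIndepFun (Sum.elim g m) μ)
    (gmask : Fin k → Ω → ℝ)
    (hgmask : ∀ i ω, gmask i ω = (m i ω / p i) * g i ω) :
    (∀ i, cov μ (gmask i) (gmask i)
        = var μ (g i) / p i + ((1 - p i) / p i) * (∫ ω, g i ω ∂μ) ^ 2)
      ∧ (∀ i j, i ≠ j → cov μ (gmask i) (gmask j) = 0) :=
  masked_gradient_covariance_structure_general μ k g m p hp0 hgm hmm hm01 hmp hind gmask hgmask
end
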